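/- arXiv:2502.02566 — 6 statements merged into one kernel-verified Lean document; each statement's English description precedes it below -/
import Mathlib

section
/- Let H and H0 be bounded self-adjoint operators on a complex Hilbert space, let E ∈ ℝ, δ > 0, η ≥ 0, ε ≥ 0, and suppose ‖ρ_{δ,E}(H) − ρ_{δ,E}(H0)‖_op ≤ ε. Then every unit vector ψ with ‖(H − E)ψ‖ ≤ η satisfies ‖ψ − ρ_{δ,E}(H0)ψ‖ ≤ ε + 2 η δ^{−1}. -/
noncomputable section

/-- If `‖ρ_{δ,E}(H) - ρ_{δ,E}(H0)‖ ≤ ε`, then every unit vector `ψ` with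
`‖(H - E)ψ‖ ≤ η` satisfies `‖ψ - ρ_{δ,E}(H0)ψ‖ ≤ ε + 2ηδ⁻¹`.  Here `ρ_{δ,E}(A)` is the image
of `x ↦ ρ((x-E)/δ)` under the continuous functional calculus of the bounded self-adjoint
operator `A`. -/
theorem approx_eigenfunction_frequency_localization
    {𝓗 : Type} [NormedAddCommGroup 𝓗] [InnerProductSpace ℂ 𝓗] [CompleteSpace 𝓗]
    (ρ : ℝ → ℝ) (hρsmooth : ContDiff ℝ (⊤ : ℕ∞) ρ)
    (hρsupp : Function.support ρ ⊆ Set.Icc (-1) 1)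
    (hρ01 : ∀ x, ρ x ∈ Set.Icc (0 : ℝ) 1)
    (hρone : ∀ x : ℝ, |x| ≤ 1 / 2 → ρ x = 1)
    (H H0 : 𝓗 →L[ℂ] 𝓗) (hH : IsSelfAdjoint H) (hH0 : IsSelfAdjoint H0)
    (E δ η ε : ℝ) (hδ : 0 < δ) (hη : 0 ≤ η) (hε : 0 ≤ ε)
    (hproj : ‖cfc (fun x : ℝ => ρ ((x - E) / δ)) H -
        cfc (fun x : ℝ => ρ ((x - E) / δ)) H0‖ ≤ ε)
    (ψ : 𝓗) (hψ : ‖ψ‖ = 1) (hHψ : ‖H ψ - (E : ℂ) • ψ‖ ≤ η) :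
    ‖ψ - cfc (fun x : ℝ => ρ ((x - E) / δ)) H0 ψ‖ ≤ ε + 2 * η / δ := by
  set f : ℝ → ℝ := fun x => ρ ((x - E) / δ) with hf
  have hfc : Continuous f := hρsmooth.continuous.comp (by continuity)
  -- g vanishes near E
  have hg0 : ∀ x : ℝ, |x - E| ≤ δ / 2 → 1 - f x = 0 := by
    intro x hx
    have : |(x - E) / δ| ≤ 1 / 2 := by
      rw [abs_div, abs_of_pos hδ, div_le_div_iff₀ hδ (by norm_num)]
      linarith
    simp [hf, hρone _ this]
  set h : ℝ → ℝ := fun x => (1 - f x) / (x - E) with hh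
  have hhc : Continuous h := by
    rw [continuous_iff_continuousAt]
    intro x
    rcases eq_or_ne x E with rfl | hxE
    · have : ∀ᶠ y in nhds x, h y = 0 := by
        filter_upwards [Metric.ball_mem_nhds x (half_pos hδ)] with y hy
        have : |y - x| ≤ δ / 2 := le_of_lt (by simpa [Real.dist_eq] using hy)
        simp [hh, hg0 y this]
      exact (continuousAt_congr this).mpr continuousAt_const
    · exact ((continuous_const.sub hfc).continuousAt).div
        ((continuous_id.sub continuous_const).continuousAt) (sub_ne_zero.mpr hxE)
  have hfactor : ∀ x : ℝ, 1 - f x = h x * (x - E) := by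
    intro x
    rcases eq_or_ne x E with rfl | hxE
    · simp [hg0 x (by simp [le_of_lt (half_pos hδ)])]
    · simp [hh, div_mul_cancel₀ _ (sub_ne_zero.mpr hxE)]
  have hhbdd : ∀ x : ℝ, |h x| ≤ 2 / δ := by
    intro x
    rcases le_or_gt (|x - E|) (δ / 2) with hx | hx
    · simp [hh, hg0 x hx, le_of_lt (div_pos two_pos hδ)]
    · have hfx := hρ01 ((x - E) / δ)
      have hnum : |1 - f x| ≤ 1 := by
        rw [abs_le]; constructor <;> [linarith [hfx.2]; linarith [hfx.1]]
      have hden : (0:ℝ) < |x - E| := lt_trans (half_pos hδ) hx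
      rw [hh]
      calc |(1 - f x) / (x - E)| = |1 - f x| / |x - E| := abs_div _ _
        _ ≤ 1 / (δ / 2) := by
            apply div_le_div₀ (by norm_num) hnum (half_pos hδ) hx.le
        _ = 2 / δ := one_div_div δ 2
  -- operator identities
  have hsub : cfc (fun x : ℝ => (1:ℝ) - f x) H = 1 - cfc f H := by
    rw [cfc_sub _ _ H (continuousOn_const) (hfc.continuousOn)]
    congr 1
    exact cfc_const_one ℝ H
  have hmul : cfc (fun x : ℝ => (1:ℝ) - f x) H
      = cfc h H * cfc (fun x : ℝ => x - E) H := by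
    rw [← cfc_mul h (fun x : ℝ => x - E) H (hhc.continuousOn)
      (by fun_prop)]
    exact cfc_congr fun x _ => hfactor x
  have hlin : cfc (fun x : ℝ => x - E) H = H - algebraMap ℝ (𝓗 →L[ℂ] 𝓗) E := by
    rw [cfc_sub (fun x : ℝ => x) (fun _ => E) H (by fun_prop) continuousOn_const,
      cfc_id' ℝ H, cfc_const E H]
  have hnormh : ‖cfc h H‖ ≤ 2 / δ :=
    norm_cfc_le (le_of_lt (div_pos two_pos hδ)) fun x _ => by
      simpa [Real.norm_eq_abs] using hhbdd x
  -- vector computation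
  have happE : (algebraMap ℝ (𝓗 →L[ℂ] 𝓗) E) ψ = (E : ℂ) • ψ := by
    simp [Algebra.algebraMap_eq_smul_one]
  have key : ψ - cfc f H ψ = cfc h H (H ψ - (E : ℂ) • ψ) := by
    have := congrArg (fun T : 𝓗 →L[ℂ] 𝓗 => T ψ) (hsub.symm.trans (hmul.trans (by rw [hlin])))
    simp only [ContinuousLinearMap.sub_apply, ContinuousLinearMap.one_apply,
      ContinuousLinearMap.mul_apply] at this
    rw [this, happE]
  have hterm2 : ‖ψ - cfc f H ψ‖ ≤ 2 * η / δ := by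
    rw [key]
    calc ‖cfc h H (H ψ - (E : ℂ) • ψ)‖ ≤ ‖cfc h H‖ * ‖H ψ - (E : ℂ) • ψ‖ :=
          (cfc h H).le_opNorm _
      _ ≤ (2 / δ) * η := by
          apply mul_le_mul hnormh hHψ (norm_nonneg _) (le_of_lt (div_pos two_pos hδ))
      _ = 2 * η / δ := by ring
  have hterm1 : ‖cfc f H ψ - cfc f H0 ψ‖ ≤ ε := by
    calc ‖cfc f H ψ - cfc f H0 ψ‖ = ‖(cfc f H - cfc f H0) ψ‖ := by
          rw [ContinuousLinearMap.sub_apply]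
      _ ≤ ‖cfc f H - cfc f H0‖ * ‖ψ‖ := (cfc f H - cfc f H0).le_opNorm ψ
      _ ≤ ε := by rw [hψ, mul_one]; exact hproj
  have hsplit : ψ - cfc f H0 ψ = (cfc f H ψ - cfc f H0 ψ) + (ψ - cfc f H ψ) := by abel
  calc ‖ψ - cfc f H0 ψ‖ = ‖(cfc f H ψ - cfc f H0 ψ) + (ψ - cfc f H ψ)‖ := by rw [hsplit]
    _ ≤ ‖cfc f H ψ - cfc f H0 ψ‖ + ‖ψ - cfc f H ψ‖ := norm_add_le _ _
    _ ≤ ε + 2 * η / δ := add_le_add hterm1 hterm2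
end
end

section
/- Let A and B be Hermitian n×n complex matrices, let p ≥ 1 be an integer, and let 0 ≤ ℓ ≤ 2p − 2. Then the trace tr(A B^{2p−2−ℓ} A B^{ℓ}) is a real number and satisfies tr(A B^{2p−2−ℓ} A B^{ℓ}) ≤ tr(A² B^{2p−2}). -/
/-!
Diagonalise `B = U diag(λ) U*` and put `C = U* A U`, which is again Hermitian. Then
`tr(A B^a A B^b) = ∑ᵢⱼ |Cᵢⱼ|² λᵢ^b λⱼ^a`, a real number. When `a + b` is even the functions
`λ ↦ λ^a` and `λ ↦ λ^b` are similarly ordered (both monotone, or both monotone in `|λ|`), so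
the rearrangement inequality, summed against the symmetric weights `|Cᵢⱼ|²`, bounds this by
`∑ᵢⱼ |Cᵢⱼ|² λᵢ^(a+b) = tr(A² B^(a+b))`.
-/

open Matrix Unitary

theorem Monovary.sum_sum_mul_le_of_symm {ι α : Type*} [Fintype ι] [CommRing α] [LinearOrder α]
    [IsStrictOrderedRing α] {f g : ι → α} (hfg : Monovary f g) {w : ι → ι → α}
    (hw : ∀ i j, 0 ≤ w i j) (hw_symm : ∀ i j, w i j = w j i) :
    ∑ i, ∑ j, w i j * (f i * g j) ≤ ∑ i, ∑ j, w i j * (f i * g i) := by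
  have swap (F : ι → ι → α) : ∑ i, ∑ j, w i j * F j i = ∑ i, ∑ j, w i j * F i j := by
    rw [Finset.sum_comm]
    exact Finset.sum_congr rfl fun i _ ↦ Finset.sum_congr rfl fun j _ ↦ by rw [hw_symm]
  have key : ∑ i, ∑ j, w i j * (f i * g j + f j * g i)
      ≤ ∑ i, ∑ j, w i j * (f i * g i + f j * g j) :=
    Finset.sum_le_sum fun i _ ↦ Finset.sum_le_sum fun j _ ↦
      mul_le_mul_of_nonneg_left (hfg.mul_add_mul_le_mul_add_mul i j) (hw i j)
  have swap_mixed := swap fun i j ↦ f i * g j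
  have swap_diag := swap fun i _ ↦ f i * g i
  simp only [mul_add, Finset.sum_add_distrib] at key
  rw [swap_mixed, swap_diag] at key
  linarith

theorem monovary_pow_pow_of_even_add {R : Type*} [Ring R] [LinearOrder R] [IsStrictOrderedRing R]
    {a b : ℕ} (hab : Even (a + b)) : Monovary (fun x : R ↦ x ^ a) (fun x : R ↦ x ^ b) := by
  rcases Nat.even_or_odd a with ha | ha
  · have hb : Even b := (Nat.even_add.mp hab).mp ha
    intro x y hxy
    dsimp only at hxy ⊢
    rw [← hb.pow_abs x, ← hb.pow_abs y] at hxy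
    rw [← ha.pow_abs x, ← ha.pow_abs y]
    exact pow_le_pow_left₀ (abs_nonneg x)
      (lt_of_pow_lt_pow_left₀ b (abs_nonneg y) hxy).le a
  · have hb : Odd b := by
      rw [← Nat.not_even_iff_odd] at ha ⊢
      rwa [← Nat.even_add.mp hab]
    intro x y hxy
    exact ha.strictMono_pow.monotone (hb.strictMono_pow.lt_iff_lt.mp hxy).le

theorem Matrix.trace_conjStarAlgAut {ι R : Type*} [Fintype ι] [DecidableEq ι] [CommSemiring R]
    [StarRing R] (u : unitary (Matrix ι ι R)) (X : Matrix ι ι R) :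
    trace (conjStarAlgAut R _ u X) = trace X := by
  rw [conjStarAlgAut_apply, trace_mul_cycle, coe_star_mul_self, one_mul]

variable {ι 𝕜 : Type*} [Fintype ι] [DecidableEq ι] [RCLike 𝕜]

theorem Matrix.IsHermitian.map_conjStarAlgAut {A : Matrix ι ι 𝕜} (hA : A.IsHermitian)
    (u : unitary (Matrix ι ι 𝕜)) : (conjStarAlgAut 𝕜 _ u A).IsHermitian :=
  IsSelfAdjoint.map hA _

theorem Matrix.IsHermitian.trace_mul_diagonal_mul_mul_diagonal {C : Matrix ι ι 𝕜}
    (hC : C.IsHermitian) (x y : ι → ℝ) :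
    trace (C * diagonal (RCLike.ofReal ∘ x) * C * diagonal (RCLike.ofReal ∘ y)) =
      ((∑ i, ∑ j, ‖C i j‖ ^ 2 * (y i * x j) : ℝ) : 𝕜) := by
  simp only [trace, diag, mul_apply, diagonal_apply, Function.comp_apply, mul_ite, mul_zero,
    Finset.sum_ite_eq', Finset.mem_univ, if_true, Finset.sum_mul]
  push_cast
  refine Finset.sum_congr rfl fun i _ ↦ Finset.sum_congr rfl fun j _ ↦ ?_
  rw [← RCLike.mul_conj, ← hC.apply j i, RCLike.star_def]
  ring

theorem Matrix.IsHermitian.trace_mul_pow_mul_mul_pow {A B : Matrix ι ι 𝕜} (hA : A.IsHermitian)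
    (hB : B.IsHermitian) (a b : ℕ) :
    trace (A * B ^ a * A * B ^ b) =
      ((∑ i, ∑ j, ‖conjStarAlgAut 𝕜 _ (star hB.eigenvectorUnitary) A i j‖ ^ 2 *
        (hB.eigenvalues i ^ b * hB.eigenvalues j ^ a) : ℝ) : 𝕜) := by
  have hC := hA.map_conjStarAlgAut (star hB.eigenvectorUnitary)
  have hpow (k : ℕ) : (RCLike.ofReal ∘ hB.eigenvalues : ι → 𝕜) ^ k =
      RCLike.ofReal ∘ (hB.eigenvalues ^ k) := by
    ext; simp
  rw [← trace_conjStarAlgAut (star hB.eigenvectorUnitary), map_mul, map_mul, map_mul, map_pow,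
    map_pow, hB.conjStarAlgAut_star_eigenvectorUnitary, diagonal_pow, diagonal_pow, hpow, hpow,
    hC.trace_mul_diagonal_mul_mul_diagonal]
  rfl

theorem Matrix.IsHermitian.im_trace_mul_pow_mul_mul_pow {A B : Matrix ι ι 𝕜}
    (hA : A.IsHermitian) (hB : B.IsHermitian) (a b : ℕ) :
    RCLike.im (trace (A * B ^ a * A * B ^ b)) = 0 := by
  rw [hA.trace_mul_pow_mul_mul_pow hB, RCLike.ofReal_im]

theorem Matrix.IsHermitian.re_trace_mul_pow_mul_mul_pow_le {A B : Matrix ι ι 𝕜}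
    (hA : A.IsHermitian) (hB : B.IsHermitian) {a b : ℕ} (hab : Even (a + b)) :
    RCLike.re (trace (A * B ^ a * A * B ^ b)) ≤ RCLike.re (trace (A ^ 2 * B ^ (a + b))) := by
  set C := conjStarAlgAut 𝕜 _ (star hB.eigenvectorUnitary) A
  have hC : C.IsHermitian := hA.map_conjStarAlgAut _
  have hsq : A ^ 2 * B ^ (a + b) = A * B ^ 0 * A * B ^ (a + b) := by
    rw [pow_zero, mul_one, sq]
  have hmono : Monovary (fun i ↦ hB.eigenvalues i ^ b) (fun i ↦ hB.eigenvalues i ^ a) :=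
    (monovary_pow_pow_of_even_add (add_comm a b ▸ hab)).comp_right hB.eigenvalues
  rw [hsq, hA.trace_mul_pow_mul_mul_pow hB, hA.trace_mul_pow_mul_mul_pow hB, RCLike.ofReal_re,
    RCLike.ofReal_re]
  calc _ ≤ ∑ i, ∑ j, ‖C i j‖ ^ 2 * (hB.eigenvalues i ^ b * hB.eigenvalues i ^ a) :=
        hmono.sum_sum_mul_le_of_symm (fun _ _ ↦ sq_nonneg _) fun i j ↦ by
          rw [← hC.apply i j, norm_star]
    _ = _ := by simp_rw [pow_zero, mul_one, ← pow_add, add_comm b a]; rfl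

theorem trace_rearrangement_inequality_general
    (n : ℕ) (A B : Matrix (Fin n) (Fin n) ℂ)
    (hA : A.IsHermitian) (hB : B.IsHermitian)
    (p : ℕ) (ℓ : ℕ) (hℓ : ℓ ≤ 2 * p - 2) :
    (Matrix.trace (A * B ^ (2 * p - 2 - ℓ) * A * B ^ ℓ)).im = 0 ∧
    (Matrix.trace (A * B ^ (2 * p - 2 - ℓ) * A * B ^ ℓ)).re ≤
      (Matrix.trace (A ^ 2 * B ^ (2 * p - 2))).re := by
  have hsum : 2 * p - 2 - ℓ + ℓ = 2 * p - 2 := Nat.sub_add_cancel hℓ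
  have heven : Even (2 * p - 2 - ℓ + ℓ) := by rw [hsum]; exact ⟨p - 1, by omega⟩
  refine ⟨hA.im_trace_mul_pow_mul_mul_pow hB _ _, ?_⟩
  simpa only [hsum, RCLike.re_to_complex] using hA.re_trace_mul_pow_mul_mul_pow_le hB heven

/-- trace rearrangement inequality.  For Hermitian `A, B`, an integer
`p ≥ 1` and `0 ≤ ℓ ≤ 2p - 2`, the trace `tr(A B^{2p-2-ℓ} A B^ℓ)` is real and bounded by
`tr(A² B^{2p-2})`. -/
theorem trace_rearrangement_inequality
    (n : ℕ) (hn : 1 ≤ n) (A B : Matrix (Fin n) (Fin n) ℂ)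
    (hA : A.IsHermitian) (hB : B.IsHermitian)
    (p : ℕ) (hp : 1 ≤ p) (ℓ : ℕ) (hℓ : ℓ ≤ 2 * p - 2) :
    (Matrix.trace (A * B ^ (2 * p - 2 - ℓ) * A * B ^ ℓ)).im = 0 ∧
    (Matrix.trace (A * B ^ (2 * p - 2 - ℓ) * A * B ^ ℓ)).re ≤
      (Matrix.trace (A ^ 2 * B ^ (2 * p - 2))).re :=
  trace_rearrangement_inequality_general n A B hA hB p ℓ hℓ
end

section
/- Let A be a Hermitian n×n complex matrix with (necessarily real) eigenvalues λ_1, …, λ_n listed with multiplicity, and let φ : ℝ → ℝ be a convex function. Then Σ_{j=1}^n φ(a_{jj}) ≤ Σ_{k=1}^n φ(λ_k), where a_{jj} denotes the (real) j-th diagonal entry of A. -/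
/-!
Writing `A = U D Uᴴ` with `U` unitary and `D` the diagonal of eigenvalues, the diagonal of `A`
is `M λ`, where `M j k = |U j k|²`. The unitarity of `U` makes `M` doubly stochastic, so each
`a_jj` is a convex combination of the eigenvalues; Jensen's inequality row by row, summed using
the unit column sums of `M`, gives the claim.
-/
open Finset Matrix

theorem ConvexOn.sum_map_mulVec_le {n : Type*} [Fintype n] [DecidableEq n] {s : Set ℝ}
    {φ : ℝ → ℝ} (hφ : ConvexOn ℝ s φ) {M : Matrix n n ℝ} (hM : M ∈ doublyStochastic ℝ n)
    {x : n → ℝ} (hx : ∀ j, x j ∈ s) :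
    ∑ i, φ ((M *ᵥ x) i) ≤ ∑ j, φ (x j) :=
  calc ∑ i, φ ((M *ᵥ x) i)
      ≤ ∑ i, ∑ j, M i j * φ (x j) :=
        sum_le_sum fun i _ => hφ.map_sum_le (fun j _ => hM.1 i j)
          (sum_row_of_mem_doublyStochastic hM i) fun j _ => hx j
    _ = ∑ j, φ (x j) := by
        rw [sum_comm]
        simp only [← sum_mul, sum_col_of_mem_doublyStochastic hM, one_mul]

namespace Matrix

variable {n 𝕜 : Type*} [Fintype n] [DecidableEq n] [RCLike 𝕜]

theorem sum_norm_sq_row_of_mem_unitaryGroup {U : Matrix n n 𝕜} (hU : U ∈ unitaryGroup n 𝕜)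
    (i : n) : ∑ j, ‖U i j‖ ^ 2 = 1 := by
  have := congrFun₂ (mem_unitaryGroup_iff.1 hU) i i
  simp only [mul_apply, star_apply, RCLike.star_def, RCLike.mul_conj, one_apply_eq] at this
  exact_mod_cast this

theorem norm_sq_mem_doublyStochastic {U : Matrix n n 𝕜} (hU : U ∈ unitaryGroup n 𝕜) :
    (fun i j => ‖U i j‖ ^ 2) ∈ doublyStochastic ℝ n := by
  refine mem_doublyStochastic_iff_sum.2
    ⟨fun i j => sq_nonneg _, sum_norm_sq_row_of_mem_unitaryGroup hU, fun j => ?_⟩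
  simpa [star_apply] using sum_norm_sq_row_of_mem_unitaryGroup (Unitary.star_mem hU) j

theorem IsHermitian.re_diag_eq_mulVec_eigenvalues {A : Matrix n n 𝕜} (hA : A.IsHermitian) :
    (fun i => RCLike.re (A i i)) =
      (fun i j => ‖(hA.eigenvectorUnitary : Matrix n n 𝕜) i j‖ ^ 2) *ᵥ hA.eigenvalues := by
  ext i
  set U : Matrix n n 𝕜 := (hA.eigenvectorUnitary : Matrix n n 𝕜)
  have hdiag : A i i = ∑ j, ((‖U i j‖ ^ 2 * hA.eigenvalues j : ℝ) : 𝕜) := by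
    conv_lhs => rw [hA.spectral_theorem, Unitary.conjStarAlgAut_apply]
    rw [mul_apply]
    simp only [mul_diagonal, star_apply, RCLike.star_def, Function.comp_apply]
    refine sum_congr rfl fun j _ => ?_
    rw [mul_right_comm, RCLike.mul_conj]
    push_cast
    ring
  rw [hdiag, map_sum]
  simp only [RCLike.ofReal_re, mulVec, dotProduct]

end Matrix

theorem matrix_jensen_inequality_general
    (n : ℕ) (A : Matrix (Fin n) (Fin n) ℂ) (hA : A.IsHermitian)
    (φ : ℝ → ℝ) (hφ : ConvexOn ℝ Set.univ φ) :
    ∑ j, φ (A j j).re ≤ ∑ k, φ (hA.eigenvalues k) := by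
  have h := hφ.sum_map_mulVec_le (norm_sq_mem_doublyStochastic hA.eigenvectorUnitary.2)
    (x := hA.eigenvalues) fun _ => Set.mem_univ _
  rwa [← hA.re_diag_eq_mulVec_eigenvalues] at h

/-- matrix Jensen inequality.  For a Hermitian matrix `A` with eigenvalues
`λ_1, …, λ_n` (with multiplicity) and a convex `φ : ℝ → ℝ`, one has
`∑ j, φ(a_{jj}) ≤ ∑ k, φ(λ_k)`. -/
theorem matrix_jensen_inequality
    (n : ℕ) (hn : 1 ≤ n) (A : Matrix (Fin n) (Fin n) ℂ) (hA : A.IsHermitian)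
    (φ : ℝ → ℝ) (hφ : ConvexOn ℝ Set.univ φ) :
    ∑ j, φ (A j j).re ≤ ∑ k, φ (hA.eigenvalues k) :=
  matrix_jensen_inequality_general n A hA φ hφ
end

section
/- Let A and B be Hermitian n×n complex matrices and let p, q ∈ (1, ∞) with 1/p + 1/q = 1. Then the trace tr(AB) is a real number and satisfies tr(AB) ≤ (Σ_{k=1}^n |λ_k(A)|^p)^{1/p} · (Σ_{k=1}^n |λ_k(B)|^q)^{1/q}, where λ_1(M), …, λ_n(M) denote the (real) eigenvalues of a Hermitian matrix M listed with multiplicity. -/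
/-! Diagonalise `A = U diag(a) U*` and `B = V diag(b) V*`. With `W = U* V`, one gets
`tr(AB) = ∑ᵢⱼ aᵢ bⱼ |Wᵢⱼ|²`, which is real, and the weights `|Wᵢⱼ|²` form a doubly stochastic
matrix because `W` is unitary. Writing each weight `s` as `s^(1/p) s^(1/q)` and applying the
discrete Hölder inequality on index pairs bounds the sum by `‖a‖_p ‖b‖_q`, since the row and column
sums of the weights are `1`. -/

open Finset

namespace Matrix

variable {𝕜 ι : Type*} [RCLike 𝕜] [Fintype ι] [DecidableEq ι]

lemma sum_norm_sq_apply_eq_one_of_mem_unitaryGroup {U : Matrix ι ι 𝕜}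
    (hU : U ∈ unitaryGroup ι 𝕜) (i : ι) : ∑ j, ‖U i j‖ ^ 2 = 1 := by
  have h := congr_fun₂ (mem_unitaryGroup_iff.mp hU) i i
  simp only [mul_apply, star_apply, RCLike.star_def, RCLike.mul_conj, one_apply_eq] at h
  exact_mod_cast h

lemma of_norm_sq_mem_doublyStochastic_of_mem_unitaryGroup {U : Matrix ι ι 𝕜}
    (hU : U ∈ unitaryGroup ι 𝕜) : (of fun i j => ‖U i j‖ ^ 2) ∈ doublyStochastic ℝ ι :=
  mem_doublyStochastic_iff_sum.mpr ⟨fun _ _ => sq_nonneg _,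
    sum_norm_sq_apply_eq_one_of_mem_unitaryGroup hU,
    sum_norm_sq_apply_eq_one_of_mem_unitaryGroup (transpose_mem_unitaryGroup_iff.mpr hU)⟩

lemma trace_diagonal_mul_mul_diagonal_mul_conjTranspose (W : Matrix ι ι 𝕜) (a b : ι → ℝ) :
    trace (diagonal (RCLike.ofReal ∘ a) * W * diagonal (RCLike.ofReal ∘ b) * Wᴴ) =
      ((∑ i, ∑ j, a i * b j * ‖W i j‖ ^ 2 : ℝ) : 𝕜) := by
  simp only [trace, diag_apply, mul_apply, diagonal_apply, Function.comp_apply, ite_mul, zero_mul,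
    sum_ite_eq, mem_univ, ↓reduceIte, mul_ite, mul_zero, sum_ite_eq', conjTranspose_apply,
    RCLike.star_def]
  push_cast
  refine sum_congr rfl fun i _ => sum_congr rfl fun j _ => ?_
  rw [← RCLike.mul_conj]
  ring

lemma IsHermitian.trace_mul_eq_sum {A B : Matrix ι ι 𝕜} (hA : A.IsHermitian)
    (hB : B.IsHermitian) :
    trace (A * B) = ((∑ i, ∑ j, hA.eigenvalues i * hB.eigenvalues j *
      ‖(star hA.eigenvectorUnitary * hB.eigenvectorUnitary : unitaryGroup ι 𝕜) i j‖ ^ 2 : ℝ) :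
        𝕜) := by
  rw [← trace_diagonal_mul_mul_diagonal_mul_conjTranspose]
  conv_lhs => rw [hA.spectral_theorem, hB.spectral_theorem]
  simp only [Unitary.conjStarAlgAut_apply, UnitaryGroup.mul_apply, conjTranspose_mul]
  rw [Unitary.coe_star, ← star_eq_conjTranspose, ← star_eq_conjTranspose, star_star]
  simp only [Matrix.mul_assoc]
  rw [trace_mul_comm (hA.eigenvectorUnitary : Matrix ι ι 𝕜)]
  simp only [Matrix.mul_assoc]

lemma sum_sum_mul_mul_le_of_mem_doublyStochastic {S : Matrix ι ι ℝ}
    (hS : S ∈ doublyStochastic ℝ ι) (a b : ι → ℝ) {p q : ℝ} (hpq : p.HolderConjugate q) :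
    ∑ i, ∑ j, a i * b j * S i j ≤ (∑ i, |a i| ^ p) ^ (1 / p) * (∑ j, |b j| ^ q) ^ (1 / q) := by
  have hS0 : ∀ i j, 0 ≤ S i j := fun i j => nonneg_of_mem_doublyStochastic hS
  set f : ι × ι → ℝ := fun x => S x.1 x.2 ^ p⁻¹ * a x.1
  set g : ι × ι → ℝ := fun x => S x.1 x.2 ^ q⁻¹ * b x.2
  have hfg : ∀ i j, f (i, j) * g (i, j) = a i * b j * S i j := fun i j => by
    have hsplit : S i j ^ p⁻¹ * S i j ^ q⁻¹ = S i j := by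
      rw [← Real.rpow_add' (hS0 i j) (by simp [hpq.inv_add_inv_eq_one]),
        hpq.inv_add_inv_eq_one, Real.rpow_one]
    simp only [f, g]
    linear_combination a i * b j * hsplit
  have hf : ∀ i j, |f (i, j)| ^ p = S i j * |a i| ^ p := fun i j => by
    rw [abs_mul, abs_of_nonneg (Real.rpow_nonneg (hS0 i j) _),
      Real.mul_rpow (Real.rpow_nonneg (hS0 i j) _) (abs_nonneg _),
      Real.rpow_inv_rpow (hS0 i j) hpq.ne_zero]
  have hg : ∀ i j, |g (i, j)| ^ q = S i j * |b j| ^ q := fun i j => by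
    rw [abs_mul, abs_of_nonneg (Real.rpow_nonneg (hS0 i j) _),
      Real.mul_rpow (Real.rpow_nonneg (hS0 i j) _) (abs_nonneg _),
      Real.rpow_inv_rpow (hS0 i j) hpq.symm.ne_zero]
  calc ∑ i, ∑ j, a i * b j * S i j = ∑ x, f x * g x := by
        simp only [Fintype.sum_prod_type, hfg]
    _ ≤ (∑ x, |f x| ^ p) ^ (1 / p) * (∑ x, |g x| ^ q) ^ (1 / q) :=
        Real.inner_le_Lp_mul_Lq univ f g hpq
    _ = (∑ i, |a i| ^ p) ^ (1 / p) * (∑ j, |b j| ^ q) ^ (1 / q) := by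
        rw [Fintype.sum_prod_type, Fintype.sum_prod_type,
          sum_comm (f := fun i j => |g (i, j)| ^ q)]
        simp only [hf, hg, ← sum_mul, sum_row_of_mem_doublyStochastic hS,
          sum_col_of_mem_doublyStochastic hS, one_mul]

end Matrix

theorem matrix_holder_inequality_general
    (n : ℕ) (A B : Matrix (Fin n) (Fin n) ℂ)
    (hA : A.IsHermitian) (hB : B.IsHermitian)
    (p q : ℝ) (hp : 1 < p) (hpq : 1 / p + 1 / q = 1) :
    (Matrix.trace (A * B)).im = 0 ∧
    (Matrix.trace (A * B)).re ≤
      (∑ k, |hA.eigenvalues k| ^ p) ^ (1 / p) * (∑ k, |hB.eigenvalues k| ^ q) ^ (1 / q) := by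
  have hpq' : p.HolderConjugate q :=
    Real.holderConjugate_iff.mpr ⟨hp, by simpa only [one_div] using hpq⟩
  rw [hA.trace_mul_eq_sum hB]
  exact ⟨Complex.ofReal_im _, Matrix.sum_sum_mul_mul_le_of_mem_doublyStochastic
    (Matrix.of_norm_sq_mem_doublyStochastic_of_mem_unitaryGroup
      (star hA.eigenvectorUnitary * hB.eigenvectorUnitary).prop) _ _ hpq'⟩

/-- matrix Hölder inequality.  For Hermitian `A, B` and conjugate exponents
`p, q ∈ (1, ∞)`, the trace `tr(AB)` is real and bounded by
`(∑ |λ_k(A)|^p)^{1/p} (∑ |λ_k(B)|^q)^{1/q}`. -/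
theorem matrix_holder_inequality
    (n : ℕ) (hn : 1 ≤ n) (A B : Matrix (Fin n) (Fin n) ℂ)
    (hA : A.IsHermitian) (hB : B.IsHermitian)
    (p q : ℝ) (hp : 1 < p) (hq : 1 < q) (hpq : 1 / p + 1 / q = 1) :
    (Matrix.trace (A * B)).im = 0 ∧
    (Matrix.trace (A * B)).re ≤
      (∑ k, |hA.eigenvalues k| ^ p) ^ (1 / p) * (∑ k, |hB.eigenvalues k| ^ q) ^ (1 / q) :=
  matrix_holder_inequality_general n A B hA hB p q hp hpq
end

section
/- There exists a constant C > 0 depending only on d such that for every s > 0 and every m ∈ ℤ^d with |m| ≤ s/100, the free discrete Schrödinger kernel satisfies |K_d(s, m)| ≤ C s^{−d/2}. -/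
open MeasureTheory

noncomputable section

/-- Euclidean norm of a lattice point. -/
def znorm {d : ℕ} (n : Fin d → ℤ) : ℝ := Real.sqrt (∑ i, ((n i : ℝ)) ^ 2)

/-- The kernel `K_d(s, m) = (2π)^{-d} ∫_{[-π,π]^d} exp(-2is ∑_j cos ξ_j - i m·ξ) dξ`
of the free discrete Schrödinger propagator `e^{-isH0}` on `ℓ²(ℤ^d)`. -/
def freeKernel (d : ℕ) (s : ℝ) (m : Fin d → ℤ) : ℂ :=
  ((2 * Real.pi) ^ d)⁻¹ •
    ∫ ξ in Set.univ.pi fun _ : Fin d => Set.Icc (-Real.pi) Real.pi,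
      Complex.exp (-Complex.I *
        ((2 * s * ∑ j, Real.cos (ξ j) + ∑ j, (m j : ℝ) * ξ j : ℝ) : ℂ))

/-!
The integrand of `freeKernel` is a product over coordinates, so the kernel is `(2π)^{-d}` times a
product of one-dimensional integrals `∫_{-π}^{π} e^{-i(2s cos x + μ x)} dx` with `|μ| ≤ s/100`,
and it suffices to bound each by `C / √s`. Reflecting `x ↦ -x` reduces to `[0, π]`. Where
`|cos x| ≥ 1/2` the phase has second derivative of size at least `s`, and van der Corput's
second-derivative estimate gives `O(s^{-1/2})`; on `[π/3, 2π/3]` we have `sin x ≥ 1/2`, so the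
first derivative `μ - 2s sin x` has size at least `s/2` because `μ` is small, and the
first-derivative estimate gives `O(1/s)`.
-/

open Set intervalIntegral
open Complex (I)
open scoped Complex

section VanDerCorput

variable {f f' f'' : ℝ → ℝ} {a b : ℝ}

lemma norm_cexp_neg_I_mul_ofReal (t : ℝ) : ‖cexp (-I * t)‖ = 1 := by
  simp [Complex.norm_exp]

lemma norm_integral_cexp_le_sub (f : ℝ → ℝ) (hab : a ≤ b) :
    ‖∫ x in a..b, cexp (-I * f x)‖ ≤ b - a := by
  simpa [abs_of_nonneg (sub_nonneg.2 hab)] using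
    norm_integral_le_of_norm_le_const (a := a) (b := b) (C := 1) (f := fun x => cexp (-I * f x))
      fun x _ => (norm_cexp_neg_I_mul_ofReal (f x)).le

lemma hasDerivAt_I_mul_cexp_div {x : ℝ} (hf : HasDerivAt f (f' x) x)
    (hf' : HasDerivAt f' (f'' x) x) (hx : f' x ≠ 0) :
    HasDerivAt (fun y => I * cexp (-I * f y) / f' y)
      (cexp (-I * f x) - I * cexp (-I * f x) * ↑(f'' x / f' x ^ 2)) x := by
  have hx' : (f' x : ℂ) ≠ 0 := Complex.ofReal_ne_zero.2 hx
  refine ((((hf.ofReal_comp.const_mul (-I)).cexp).const_mul I).div hf'.ofReal_comp hx').congr_deriv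
    ?_
  push_cast
  field_simp
  ring_nf
  simp only [Complex.I_sq]
  ring

lemma integral_abs_eq_abs_sub_of_hasDerivAt {h h' : ℝ → ℝ} (hab : a ≤ b)
    (hderiv : ∀ x ∈ Icc a b, HasDerivAt h (h' x) x) (hint : IntervalIntegrable h' volume a b)
    (hsgn : (∀ x ∈ Icc a b, 0 ≤ h' x) ∨ (∀ x ∈ Icc a b, h' x ≤ 0)) :
    ∫ x in a..b, |h' x| = |h b - h a| := by
  have hftc : ∫ x in a..b, h' x = h b - h a :=
    integral_eq_sub_of_hasDerivAt (fun x hx => hderiv x (uIcc_of_le hab ▸ hx)) hint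
  rcases hsgn with hpos | hneg
  · rw [integral_congr fun x hx => abs_of_nonneg (hpos x (uIcc_of_le hab ▸ hx)), hftc,
      abs_of_nonneg (hftc ▸ integral_nonneg hab hpos)]
  · have hnonneg : 0 ≤ ∫ x in a..b, -h' x :=
      integral_nonneg hab fun x hx => neg_nonneg.2 (hneg x hx)
    rw [intervalIntegral.integral_neg, hftc] at hnonneg
    rw [integral_congr fun x hx => abs_of_nonpos (hneg x (uIcc_of_le hab ▸ hx)),
      intervalIntegral.integral_neg, hftc, abs_of_nonpos (neg_nonneg.1 hnonneg)]

/-- Van der Corput's first-derivative estimate. Integrate by parts against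
`d/dx (I e^{-if} / f') = e^{-if} - I e^{-if} f''/f'^2`; since `f''` has constant sign, the
remainder is bounded by the variation `|1/f'(b) - 1/f'(a)|`. -/
theorem norm_integral_cexp_le_of_le_abs_deriv {L : ℝ} (hab : a ≤ b) (hL : 0 < L)
    (hf : ∀ x, HasDerivAt f (f' x) x) (hf' : ∀ x, HasDerivAt f' (f'' x) x)
    (hf'' : Continuous f'') (hlow : ∀ x ∈ Icc a b, L ≤ |f' x|)
    (hsgn : (∀ x ∈ Icc a b, 0 ≤ f'' x) ∨ (∀ x ∈ Icc a b, f'' x ≤ 0)) :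
    ‖∫ x in a..b, cexp (-I * f x)‖ ≤ 4 / L := by
  set E : ℝ → ℂ := fun x => cexp (-I * f x)
  set c : ℝ → ℝ := fun x => f'' x / f' x ^ 2
  set g : ℝ → ℂ := fun x => I * E x / f' x
  have hne : ∀ x ∈ Icc a b, f' x ≠ 0 := fun x hx =>
    abs_pos.1 (hL.trans_le (hlow x hx))
  have hinv : ∀ x ∈ Icc a b, |f' x|⁻¹ ≤ 1 / L := fun x hx =>
    (one_div L).symm ▸ inv_anti₀ hL (hlow x hx)
  have hfc : Continuous f := continuous_iff_continuousAt.2 fun x => (hf x).continuousAt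
  have hf'c : Continuous f' := continuous_iff_continuousAt.2 fun x => (hf' x).continuousAt
  have hE : Continuous E := by fun_prop
  have hc : ContinuousOn c (Icc a b) :=
    hf''.continuousOn.div (hf'c.pow 2).continuousOn fun x hx => pow_ne_zero 2 (hne x hx)
  have hEc : IntervalIntegrable (fun x => I * E x * (c x : ℂ)) volume a b :=
    ((continuous_const.mul hE).continuousOn.mul (Complex.continuous_ofReal.comp_continuousOn hc))
      |>.intervalIntegrable_of_Icc hab
  have hibp : ∫ x in a..b, E x = g b - g a + I * ∫ x in a..b, E x * (c x : ℂ) := by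
    have hftc := integral_eq_sub_of_hasDerivAt
      (fun x hx => hasDerivAt_I_mul_cexp_div (hf x) (hf' x) (hne x (uIcc_of_le hab ▸ hx)))
      ((hE.intervalIntegrable a b).sub hEc)
    simp only [mul_assoc] at hEc hftc
    rw [intervalIntegral.integral_sub (hE.intervalIntegrable a b) hEc,
      intervalIntegral.integral_const_mul] at hftc
    rw [show g b - g a = _ from hftc.symm]
    ring
  have hg : ∀ x ∈ Icc a b, ‖g x‖ ≤ 1 / L := fun x hx => by
    simpa [g, E, Complex.norm_exp] using hinv x hx
  have hvar : ∫ x in a..b, |c x| ≤ 2 / L := by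
    have hderiv : ∀ x ∈ Icc a b, HasDerivAt (fun y => -(f' y)⁻¹) (c x) x := fun x hx =>
      ((hf' x).inv (hne x hx)).neg.congr_deriv (by simp [c]; ring)
    have hsgn_c : (∀ x ∈ Icc a b, 0 ≤ c x) ∨ (∀ x ∈ Icc a b, c x ≤ 0) :=
      hsgn.imp (fun h x hx => div_nonneg (h x hx) (sq_nonneg _))
        (fun h x hx => div_nonpos_of_nonpos_of_nonneg (h x hx) (sq_nonneg _))
    rw [integral_abs_eq_abs_sub_of_hasDerivAt hab hderiv (hc.intervalIntegrable_of_Icc hab)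
      hsgn_c]
    calc |-(f' b)⁻¹ - -(f' a)⁻¹| ≤ |f' b|⁻¹ + |f' a|⁻¹ := by
          simpa [abs_inv] using abs_sub (-(f' b)⁻¹) (-(f' a)⁻¹)
      _ ≤ 1 / L + 1 / L := add_le_add (hinv b ⟨hab, le_rfl⟩) (hinv a ⟨le_rfl, hab⟩)
      _ = 2 / L := by ring
  have hrem : ‖∫ x in a..b, E x * (c x : ℂ)‖ ≤ 2 / L := by
    refine (intervalIntegral.norm_integral_le_integral_norm hab).trans (le_of_eq_of_le ?_ hvar)
    simp [E, Complex.norm_exp]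
  calc ‖∫ x in a..b, E x‖ ≤ ‖g b‖ + ‖g a‖ + ‖∫ x in a..b, E x * (c x : ℂ)‖ := by
        rw [hibp]
        refine (norm_add_le _ _).trans (add_le_add (norm_sub_le _ _) ?_)
        simp
    _ ≤ 1 / L + 1 / L + 2 / L :=
        add_le_add (add_le_add (hg b ⟨hab, le_rfl⟩) (hg a ⟨le_rfl, hab⟩)) hrem
    _ = 4 / L := by ring

lemma intervalIntegrable_cexp_neg_I_mul (hf : Continuous f) (a b : ℝ) :
    IntervalIntegrable (fun x => cexp (-I * f x)) volume a b :=
  (by fun_prop : Continuous fun x => cexp (-I * f x)).intervalIntegrable a b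

/-- `c` is a zero of `g`, or, if `g` has constant sign, the endpoint where `|g|` is smallest. -/
lemma exists_mul_abs_sub_le_abs {g g' : ℝ → ℝ} {K : ℝ} (hab : a ≤ b)
    (hg : ∀ x, HasDerivAt g (g' x) x) (hK : ∀ x ∈ Icc a b, K ≤ g' x) :
    ∃ c ∈ Icc a b, ∀ x ∈ Icc a b, K * |x - c| ≤ |g x| := by
  have hgc : Continuous g := continuous_iff_continuousAt.2 fun x => (hg x).continuousAt
  have hmono : MonotoneOn (fun x => g x - K * x) (Icc a b) :=
    monotoneOn_of_hasDerivWithinAt_nonneg (convex_Icc a b) (by fun_prop)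
      (fun x _ => ((hg x).sub ((hasDerivAt_id x).const_mul K)).hasDerivWithinAt)
      (fun x hx => by
        rw [interior_Icc] at hx
        simpa using hK x (Ioo_subset_Icc_self hx))
  have hgrowth : ∀ c ∈ Icc a b, ∀ x ∈ Icc a b, (c < x → 0 ≤ g c) → (x < c → g c ≤ 0) →
      K * |x - c| ≤ |g x| := by
    intro c hc x hx hright hleft
    rcases lt_trichotomy x c with hxc | rfl | hxc
    · have := hmono hx hc hxc.le
      rw [abs_of_neg (sub_neg.2 hxc)]
      linarith [hleft hxc, neg_abs_le (g x)]
    · simp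
    · have := hmono hc hx hxc.le
      rw [abs_of_pos (sub_pos.2 hxc)]
      linarith [hright hxc, le_abs_self (g x)]
  by_cases ha : 0 ≤ g a
  · exact ⟨a, left_mem_Icc.2 hab, fun x hx =>
      hgrowth a (left_mem_Icc.2 hab) x hx (fun _ => ha) fun h => absurd hx.1 (not_le.2 h)⟩
  by_cases hb : g b ≤ 0
  · exact ⟨b, right_mem_Icc.2 hab, fun x hx =>
      hgrowth b (right_mem_Icc.2 hab) x hx (fun h => absurd hx.2 (not_le.2 h)) fun _ => hb⟩
  obtain ⟨c, hc, hc0⟩ : ∃ c ∈ Icc a b, g c = 0 :=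
    intermediate_value_Icc hab hgc.continuousOn ⟨(not_le.1 ha).le, (not_le.1 hb).le⟩
  exact ⟨c, hc, fun x hx => hgrowth c hc x hx (fun _ => hc0.ge) fun _ => hc0.le⟩

/-- Van der Corput's second-derivative estimate: `|f'| ≥ √K` off an interval of length `2/√K`,
on which the trivial bound is used instead. -/
theorem norm_integral_cexp_le_of_le_abs_deriv2 {K : ℝ} (hab : a ≤ b) (hK : 0 < K)
    (hf : ∀ x, HasDerivAt f (f' x) x) (hf' : ∀ x, HasDerivAt f' (f'' x) x)
    (hf'' : Continuous f'')
    (hsgn : (∀ x ∈ Icc a b, K ≤ f'' x) ∨ (∀ x ∈ Icc a b, f'' x ≤ -K)) :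
    ‖∫ x in a..b, cexp (-I * f x)‖ ≤ 10 / √K := by
  obtain ⟨c, hc, hgrowth⟩ : ∃ c ∈ Icc a b, ∀ x ∈ Icc a b, K * |x - c| ≤ |f' x| := by
    rcases hsgn with h | h
    · exact exists_mul_abs_sub_le_abs hab hf' h
    · simpa using exists_mul_abs_sub_le_abs hab (fun x => (hf' x).neg)
        fun x hx => le_neg_of_le_neg (h x hx)
  have hfc : Continuous f := continuous_iff_continuousAt.2 fun x => (hf x).continuousAt
  have hsqrt : 0 < √K := Real.sqrt_pos.2 hK
  set δ := (√K)⁻¹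
  have hδ : 0 < δ := inv_pos.2 hsqrt
  have hKδ : K * δ = √K := by
    calc K * δ = √K * (√K * δ) := by rw [← mul_assoc, Real.mul_self_sqrt hK.le]
      _ = √K := by rw [mul_inv_cancel₀ hsqrt.ne', mul_one]
  have hside : ∀ u v, u ≤ v → Icc u v ⊆ Icc a b → (∀ x ∈ Icc u v, δ ≤ |x - c|) →
      ‖∫ x in u..v, cexp (-I * f x)‖ ≤ 4 / √K := by
    intro u v huv hsub hfar
    refine norm_integral_cexp_le_of_le_abs_deriv huv hsqrt hf hf' hf''
      (fun x hx => hKδ ▸ (mul_le_mul_of_nonneg_left (hfar x hx) hK.le).trans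
        (hgrowth x (hsub hx))) ?_
    exact hsgn.imp (fun h x hx => hK.le.trans (h x (hsub hx)))
      fun h x hx => (h x (hsub hx)).trans (neg_nonpos.2 hK.le)
  set p := max a (c - δ)
  set q := min b (c + δ)
  have hap : a ≤ p := le_max_left _ _
  have hpq : p ≤ q := (max_le hc.1 (by linarith)).trans (le_min hc.2 (by linarith))
  have hqb : q ≤ b := min_le_left _ _
  have hleft : ‖∫ x in a..p, cexp (-I * f x)‖ ≤ 4 / √K := by
    rcases le_total (c - δ) a with h | h
    · simp only [p, max_eq_left h, integral_same, norm_zero]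
      positivity
    · simp only [p, max_eq_right h]
      refine hside a (c - δ) h (Icc_subset_Icc_right (by linarith [hc.2])) fun x hx => ?_
      rw [abs_sub_comm]
      exact le_abs.2 (Or.inl (by linarith [hx.2]))
  have hright : ‖∫ x in q..b, cexp (-I * f x)‖ ≤ 4 / √K := by
    rcases le_total b (c + δ) with h | h
    · simp only [q, min_eq_left h, integral_same, norm_zero]
      positivity
    · simp only [q, min_eq_right h]
      refine hside (c + δ) b h (Icc_subset_Icc_left (by linarith [hc.1])) fun x hx => ?_
      exact le_abs.2 (Or.inl (by linarith [hx.1]))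
  have hmid : ‖∫ x in p..q, cexp (-I * f x)‖ ≤ 2 / √K := by
    refine (norm_integral_cexp_le_sub f hpq).trans ?_
    have : q - p ≤ 2 * δ := by
      linarith [min_le_right b (c + δ), le_max_right a (c - δ)]
    simpa [div_eq_mul_inv] using this
  have hint := intervalIntegrable_cexp_neg_I_mul hfc
  rw [← integral_add_adjacent_intervals (hint a p) (hint p b),
    ← integral_add_adjacent_intervals (hint p q) (hint q b)]
  calc _ ≤ 4 / √K + (2 / √K + 4 / √K) :=
        (norm_add_le _ _).trans <| add_le_add hleft <|
          (norm_add_le _ _).trans (add_le_add hmid hright)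
    _ = 10 / √K := by ring

end VanDerCorput

section FreePhase

open Real

variable {s μ : ℝ}

def freePhase (s μ x : ℝ) : ℝ := 2 * s * cos x + μ * x

lemma freePhase_neg (s μ x : ℝ) : freePhase s μ (-x) = freePhase s (-μ) x := by
  rw [freePhase, freePhase, cos_neg]
  ring

lemma continuous_freePhase (s μ : ℝ) : Continuous (freePhase s μ) := by
  unfold freePhase
  fun_prop

lemma hasDerivAt_freePhase (s μ x : ℝ) :
    HasDerivAt (freePhase s μ) (μ - 2 * s * sin x) x := by
  refine (((hasDerivAt_cos x).const_mul (2 * s)).add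
    ((hasDerivAt_id x).const_mul μ)).congr_deriv ?_
  simp only [mul_one]
  ring

lemma hasDerivAt_deriv_freePhase (s μ x : ℝ) :
    HasDerivAt (fun y => μ - 2 * s * sin y) (-(2 * s * cos x)) x := by
  simpa using ((hasDerivAt_sin x).const_mul (2 * s)).const_sub μ

lemma norm_integral_freePhase_zero_pi_le (hs : 1 ≤ s) (hμ : |μ| ≤ s / 100) :
    ‖∫ x in (0)..π, cexp (-I * freePhase s μ x)‖ ≤ 36 / √s := by
  have hs0 : 0 < s := by linarith
  have hπ := pi_pos
  have hcos_left : ∀ x ∈ Icc 0 (π / 3), 1 / 2 ≤ cos x := fun x hx =>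
    cos_pi_div_three ▸ cos_le_cos_of_nonneg_of_le_pi hx.1 (by linarith) hx.2
  have hcos_right : ∀ x ∈ Icc (2 * π / 3) π, cos x ≤ -(1 / 2) := fun x hx => by
    have := cos_le_cos_of_nonneg_of_le_pi (by linarith) hx.2 hx.1
    rwa [show 2 * π / 3 = π - π / 3 by ring, cos_pi_sub, cos_pi_div_three] at this
  have hsin_mid : ∀ x ∈ Icc (π / 3) (2 * π / 3), 1 / 2 ≤ sin x := fun x hx => by
    have hlo := cos_le_cos_of_nonneg_of_le_pi (by linarith) (by linarith [hx.2]) hx.1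
    have hhi := cos_le_cos_of_nonneg_of_le_pi (by linarith [hx.1]) (by linarith) hx.2
    rw [cos_pi_div_three] at hlo
    rw [show 2 * π / 3 = π - π / 3 by ring, cos_pi_sub, cos_pi_div_three] at hhi
    nlinarith [sin_sq_add_cos_sq x, sin_nonneg_of_nonneg_of_le_pi (by linarith [hx.1])
      (by linarith [hx.2] : x ≤ π)]
  have hlow : ∀ x ∈ Icc (π / 3) (2 * π / 3), s / 2 ≤ |μ - 2 * s * sin x| := fun x hx => by
    rw [abs_sub_comm]
    nlinarith [hsin_mid x hx, le_abs_self (2 * s * sin x - μ), le_abs_self μ, neg_abs_le μ]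
  have hf := hasDerivAt_freePhase s μ
  have hf' := hasDerivAt_deriv_freePhase s μ
  have hf'' : Continuous fun x => -(2 * s * cos x) := by fun_prop
  have h₁ : ‖∫ x in (0)..π / 3, cexp (-I * freePhase s μ x)‖ ≤ 10 / √s :=
    norm_integral_cexp_le_of_le_abs_deriv2 (by linarith) hs0 hf hf' hf'' <| Or.inr
      fun x hx => by nlinarith [hcos_left x hx]
  have h₂ : ‖∫ x in π / 3..π / 2, cexp (-I * freePhase s μ x)‖ ≤ 4 / (s / 2) :=
    norm_integral_cexp_le_of_le_abs_deriv (by linarith) (by positivity) hf hf' hf''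
      (fun x hx => hlow x ⟨hx.1, by linarith [hx.2]⟩) <| Or.inr fun x hx => by
        nlinarith [cos_nonneg_of_mem_Icc ⟨by linarith [hx.1], hx.2⟩]
  have h₃ : ‖∫ x in π / 2..2 * π / 3, cexp (-I * freePhase s μ x)‖ ≤ 4 / (s / 2) :=
    norm_integral_cexp_le_of_le_abs_deriv (by linarith) (by positivity) hf hf' hf''
      (fun x hx => hlow x ⟨by linarith [hx.1], hx.2⟩) <| Or.inl fun x hx => by
        nlinarith [cos_nonpos_of_pi_div_two_le_of_le hx.1 (by linarith [hx.2])]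
  have h₄ : ‖∫ x in 2 * π / 3..π, cexp (-I * freePhase s μ x)‖ ≤ 10 / √s :=
    norm_integral_cexp_le_of_le_abs_deriv2 (by linarith) hs0 hf hf' hf'' <| Or.inl
      fun x hx => by nlinarith [hcos_right x hx]
  have hint := intervalIntegrable_cexp_neg_I_mul (continuous_freePhase s μ)
  rw [← integral_add_adjacent_intervals (hint 0 (π / 3)) (hint _ π),
    ← integral_add_adjacent_intervals (hint (π / 3) (π / 2)) (hint _ π),
    ← integral_add_adjacent_intervals (hint (π / 2) (2 * π / 3)) (hint _ π)]
  have h₂₃ : 4 / (s / 2) ≤ 8 / √s :=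
    calc 4 / (s / 2) = 8 / s := by ring
      _ ≤ 8 / √s := div_le_div_of_nonneg_left (by norm_num) (sqrt_pos.2 hs0)
        (sqrt_le_self_iff.2 (Or.inr hs))
  calc _ ≤ 10 / √s + (4 / (s / 2) + (4 / (s / 2) + 10 / √s)) :=
        (norm_add_le _ _).trans <| add_le_add h₁ <| (norm_add_le _ _).trans <| add_le_add h₂ <|
          (norm_add_le _ _).trans <| add_le_add h₃ h₄
    _ ≤ 10 / √s + (8 / √s + (8 / √s + 10 / √s)) := by gcongr
    _ = 36 / √s := by ring

lemma norm_integral_freePhase_le (hs : 0 < s) (hμ : |μ| ≤ s / 100) :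
    ‖∫ x in -π..π, cexp (-I * freePhase s μ x)‖ ≤ 72 / √s := by
  rcases lt_or_ge s 1 with hs1 | hs1
  · have hsqrt : √s ≤ 1 := sqrt_le_one.2 hs1.le
    calc _ ≤ π - -π := norm_integral_cexp_le_sub _ (by linarith [pi_pos])
      _ ≤ 72 := by linarith [pi_lt_four]
      _ ≤ 72 / √s := le_div_self (by norm_num) (sqrt_pos.2 hs) hsqrt
  · have hint := intervalIntegrable_cexp_neg_I_mul (continuous_freePhase s μ)
    have hreflect : ∫ x in -π..0, cexp (-I * freePhase s μ x)
        = ∫ x in (0)..π, cexp (-I * freePhase s (-μ) x) := by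
      simpa [freePhase_neg] using
        (integral_comp_neg (a := 0) (b := π) fun x => cexp (-I * freePhase s μ x)).symm
    rw [← integral_add_adjacent_intervals (hint (-π) 0) (hint 0 π), hreflect]
    calc _ ≤ 36 / √s + 36 / √s := (norm_add_le _ _).trans <| add_le_add
          (norm_integral_freePhase_zero_pi_le hs1 (by rwa [abs_neg]))
          (norm_integral_freePhase_zero_pi_le hs1 hμ)
      _ = 72 / √s := by ring

end FreePhase

lemma setIntegral_univ_pi_Icc_prod {ι 𝕜 : Type*} [Fintype ι] [RCLike 𝕜] (g : ι → ℝ → 𝕜)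
    {a b : ℝ} (hab : a ≤ b) :
    ∫ ξ in univ.pi fun _ : ι => Icc a b, ∏ i, g i (ξ i) = ∏ i, ∫ x in a..b, g i x := by
  rw [volume_pi, Measure.restrict_pi_pi, integral_fintype_prod_eq_prod]
  simp only [integral_of_le hab, integral_Icc_eq_integral_Ioc]

lemma freeKernel_eq_prod (d : ℕ) (s : ℝ) (m : Fin d → ℤ) :
    freeKernel d s m = ((2 * Real.pi) ^ d)⁻¹ •
      ∏ j, ∫ x in -Real.pi..Real.pi, cexp (-I * freePhase s (m j) x) := by
  rw [freeKernel, ← setIntegral_univ_pi_Icc_prod _ (by linarith [Real.pi_pos])]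
  congr 1
  refine integral_congr_ae (Filter.Eventually.of_forall fun ξ => ?_)
  simp only [freePhase, ← Complex.exp_sum, Finset.mul_sum, ← Finset.sum_add_distrib]
  push_cast
  rw [Finset.mul_sum]

lemma abs_le_znorm {d : ℕ} (m : Fin d → ℤ) (j : Fin d) : |(m j : ℝ)| ≤ znorm m := by
  rw [← Real.sqrt_sq_eq_abs]
  exact Real.sqrt_le_sqrt (Finset.single_le_sum (fun i _ => sq_nonneg (m i : ℝ))
    (Finset.mem_univ j))

theorem free_kernel_dispersive_bound_general (d : ℕ) :
    ∃ C : ℝ, 0 < C ∧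
      ∀ s : ℝ, 0 < s → ∀ m : Fin d → ℤ, znorm m ≤ s / 100 →
        ‖freeKernel d s m‖ ≤ C * s ^ (-(d : ℝ) / 2) := by
  refine ⟨(36 / Real.pi) ^ d, by positivity, fun s hs m hm => ?_⟩
  have hfactor : ∀ j, ‖∫ x in -Real.pi..Real.pi, cexp (-I * freePhase s (m j) x)‖
      ≤ 72 / √s := fun j =>
    norm_integral_freePhase_le hs ((abs_le_znorm m j).trans hm)
  have hpow : s ^ (-(d : ℝ) / 2) = (√s ^ d)⁻¹ := by
    rw [Real.sqrt_eq_rpow, ← Real.rpow_natCast, ← Real.rpow_mul hs.le, ← Real.rpow_neg hs.le]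
    ring_nf
  calc ‖freeKernel d s m‖
      = ((2 * Real.pi) ^ d)⁻¹ *
          ∏ j, ‖∫ x in -Real.pi..Real.pi, cexp (-I * freePhase s (m j) x)‖ := by
        rw [freeKernel_eq_prod, norm_smul, norm_prod, Real.norm_of_nonneg (by positivity)]
    _ ≤ ((2 * Real.pi) ^ d)⁻¹ * (72 / √s) ^ d := by
        gcongr
        exact (Finset.prod_le_prod (fun j _ => norm_nonneg _) fun j _ => hfactor j).trans_eq
          (by rw [Finset.prod_const, Finset.card_univ, Fintype.card_fin])
    _ = (36 / Real.pi) ^ d * s ^ (-(d : ℝ) / 2) := by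
        rw [hpow, div_pow, div_pow, show (72 : ℝ) = 2 * 36 by norm_num, mul_pow, mul_pow]
        field_simp

/-- local dispersive bound.  There is `C > 0` depending only on `d` such
that for every `s > 0` and `m ∈ ℤ^d` with `|m| ≤ s/100`, `|K_d(s,m)| ≤ C s^{-d/2}`. -/
theorem free_kernel_dispersive_bound (d : ℕ) (hd : 2 ≤ d) :
    ∃ C : ℝ, 0 < C ∧
      ∀ s : ℝ, 0 < s → ∀ m : Fin d → ℤ, znorm m ≤ s / 100 →
        ‖freeKernel d s m‖ ≤ C * s ^ (-(d : ℝ) / 2) :=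
  free_kernel_dispersive_bound_general d
end
end

section
/- For all s, t ≥ 0 and every integer j ≥ 0, the Dyson series terms satisfy the product structure identity T_j(s + t) = Σ_{k=0}^{j} (e^{isH0} T_{j−k}(t) e^{−isH0}) · T_k(s), where the middle factor is the conjugation of T_{j−k}(t) by the free propagator accounting for the time shift V(s + u) = e^{isH0} V(u) e^{−isH0}. -/
open MeasureTheory

noncomputable section

variable {𝓗 : Type} [NormedAddCommGroup 𝓗] [InnerProductSpace ℂ 𝓗] [CompleteSpace 𝓗]

/-- `opExp t A = e^{-itA}`, the operator exponential. -/
def opExp (t : ℝ) (A : 𝓗 →L[ℂ] 𝓗) : 𝓗 →L[ℂ] 𝓗 :=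
  NormedSpace.exp ((-(Complex.I * t)) • A)

/-- The interaction picture potential `V(s) = e^{isH0} V e^{-isH0}`. -/
def interactionV (H0 V : 𝓗 →L[ℂ] 𝓗) (s : ℝ) : 𝓗 →L[ℂ] 𝓗 :=
  opExp (-s) H0 * V * opExp s H0

/-- `T_1(t) = ∫_0^t V(s) ds`. -/
def T1 (H0 V : 𝓗 →L[ℂ] 𝓗) (t : ℝ) : 𝓗 →L[ℂ] 𝓗 :=
  ∫ s in Set.Ioc (0 : ℝ) t, interactionV H0 V s

/-- The simplex `{0 ≤ s 0 ≤ ⋯ ≤ s (j-1) ≤ t}`. -/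
def simplex (j : ℕ) (t : ℝ) : Set (Fin j → ℝ) :=
  {s | Monotone s ∧ ∀ i, s i ∈ Set.Icc 0 t}

/-- The `j`-th term `T_j(t)` of the Dyson series: the Bochner integral over the simplex of
the decreasingly ordered product `V(s_j) ⋯ V(s_1)`.  For `j = 0` this is the identity. -/
def dyson (H0 V : 𝓗 →L[ℂ] 𝓗) (j : ℕ) (t : ℝ) : 𝓗 →L[ℂ] 𝓗 :=
  ∫ s in simplex j t, (List.ofFn fun i => interactionV H0 V (s i)).reverse.prod

/-!
Slicing the simplex along its largest coordinate, Fubini gives the recursion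
`T_{j+1}(τ) = ∫_0^τ V(u) T_j(u) du`. By induction on `j`, split `∫_0^{s+t}` at `s`: the part over
`[0, s]` is `T_{j+1}(s)`, and on the remaining part `V(s + u) = e^{isH0} V(u) e^{-isH0}` together
with the induction hypothesis at time `u` turns the integrand into a sum over `k` whose `k`-th
integral is, by the recursion again, the conjugate of `T_{j+1-k}(t)` times `T_k(s)`.
-/

lemma opExp_add (a b : ℝ) (A : 𝓗 →L[ℂ] 𝓗) : opExp (a + b) A = opExp a A * opExp b A := by
  let : NormedAlgebra ℚ (𝓗 →L[ℂ] 𝓗) := .restrictScalars ℚ ℂ _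
  rw [opExp, opExp, opExp,
    ← NormedSpace.exp_add_of_commute (((Commute.refl A).smul_left _).smul_right _), ← add_smul]
  push_cast
  ring_nf

lemma opExp_zero (A : 𝓗 →L[ℂ] 𝓗) : opExp 0 A = 1 := by
  simp [opExp]

lemma opExp_neg_mul (a : ℝ) (A : 𝓗 →L[ℂ] 𝓗) : opExp (-a) A * opExp a A = 1 := by
  rw [← opExp_add, neg_add_cancel, opExp_zero]

lemma opExp_mul_neg (a : ℝ) (A : 𝓗 →L[ℂ] 𝓗) : opExp a A * opExp (-a) A = 1 := by
  simpa using opExp_neg_mul (-a) A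

lemma opExp_commute (a b : ℝ) (A : 𝓗 →L[ℂ] 𝓗) : Commute (opExp a A) (opExp b A) := by
  rw [Commute, SemiconjBy, ← opExp_add, ← opExp_add, add_comm]

lemma continuous_opExp (A : 𝓗 →L[ℂ] 𝓗) : Continuous fun t : ℝ => opExp t A :=
  let : NormedAlgebra ℚ (𝓗 →L[ℂ] 𝓗) := .restrictScalars ℚ ℂ _
  NormedSpace.exp_continuous.comp (by fun_prop)

lemma continuous_interactionV (H0 V : 𝓗 →L[ℂ] 𝓗) : Continuous (interactionV H0 V) :=
  (((continuous_opExp H0).comp continuous_neg).mul continuous_const).mul (continuous_opExp H0)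

lemma interactionV_add (H0 V : 𝓗 →L[ℂ] 𝓗) (s u : ℝ) :
    interactionV H0 V (s + u) = opExp (-s) H0 * interactionV H0 V u * opExp s H0 := by
  rw [interactionV, interactionV, neg_add, opExp_add, opExp_add, (opExp_commute s u H0).eq]
  noncomm_ring

section OrderedProduct

variable {α M : Type*} [Monoid M]

lemma prod_reverse_ofFn_snoc (f : α → M) {j : ℕ} (σ : Fin j → α) (u : α) :
    (List.ofFn fun i => f ((Fin.snoc σ u : Fin (j + 1) → α) i)).reverse.prod
      = f u * (List.ofFn fun i => f (σ i)).reverse.prod := by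
  rw [List.ofFn_succ']
  simp

lemma continuous_prod_reverse_ofFn [TopologicalSpace α] [TopologicalSpace M] [ContinuousMul M]
    {f : α → M} (hf : Continuous f) (j : ℕ) :
    Continuous fun σ : Fin j → α => (List.ofFn fun i => f (σ i)).reverse.prod := by
  simp only [List.ofFn_eq_map, ← List.map_reverse]
  exact continuous_list_prod _ fun i _ => hf.comp (continuous_apply i)

end OrderedProduct

lemma Fin.monotone_snoc_iff {α : Type*} [Preorder α] {j : ℕ} {σ : Fin j → α} {u : α} :
    Monotone (Fin.snoc σ u : Fin (j + 1) → α) ↔ Monotone σ ∧ ∀ i, σ i ≤ u := by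
  refine ⟨fun h => ⟨fun a b hab => ?_, fun i => ?_⟩, fun ⟨hσ, hu⟩ a b hab => ?_⟩
  · simpa using h (Fin.castSucc_le_castSucc_iff.2 hab)
  · simpa using h (Fin.le_last i.castSucc)
  · induction b using Fin.lastCases with
    | last => induction a using Fin.lastCases <;> simp [hu]
    | cast b =>
      induction a using Fin.lastCases with
      | last => simp at hab
      | cast a => simpa using hσ (Fin.castSucc_le_castSucc_iff.1 hab)

lemma simplex_eq (j : ℕ) (t : ℝ) :
    simplex j t = Set.univ.pi (fun _ => Set.Icc 0 t) ∩ {s | Monotone s} := by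
  ext s
  simp only [simplex, Set.mem_ofPred_eq, Set.mem_Icc, Set.mem_inter_iff, Set.mem_pi,
    Set.mem_univ, true_implies]
  tauto

lemma isCompact_simplex (j : ℕ) (t : ℝ) : IsCompact (simplex j t) := by
  rw [simplex_eq]
  exact (isCompact_univ_pi fun _ => isCompact_Icc).inter_right isClosed_monotone

lemma measurableSet_simplex (j : ℕ) (t : ℝ) : MeasurableSet (simplex j t) :=
  (isCompact_simplex j t).isClosed.measurableSet

lemma simplex_zero (t : ℝ) : simplex 0 t = Set.univ :=
  Set.eq_univ_of_forall fun s => ⟨Subsingleton.monotone s, fun i => i.elim0⟩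

lemma snoc_mem_simplex_iff {j : ℕ} {t u : ℝ} {σ : Fin j → ℝ} :
    Fin.snoc σ u ∈ simplex (j + 1) t ↔ u ∈ Set.Icc 0 t ∧ σ ∈ simplex j u := by
  simp only [simplex, Set.mem_ofPred_eq, Fin.monotone_snoc_iff, Fin.forall_fin_succ',
    Fin.snoc_castSucc, Fin.snoc_last, Set.mem_Icc]
  grind

lemma piFinSuccAbove_last_symm_apply {α : Type*} [MeasurableSpace α] {n : ℕ} (u : α)
    (σ : Fin n → α) :
    (MeasurableEquiv.piFinSuccAbove (fun _ => α) (Fin.last n)).symm (u, σ) = Fin.snoc σ u := by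
  simp [MeasurableEquiv.piFinSuccAbove_symm_apply, Fin.insertNthEquiv, Fin.insertNth_last']

section SnocIntegral

variable {α E : Type*} [MeasureSpace α] [SigmaFinite (volume : Measure α)]
  [NormedAddCommGroup E] [NormedSpace ℝ E] {n : ℕ} {f : (Fin (n + 1) → α) → E}

lemma MeasureTheory.Integrable.integral_snoc (hf : Integrable f) :
    Integrable fun u : α => ∫ σ : Fin n → α, f (Fin.snoc σ u) := by
  have hmp := (volume_preserving_piFinSuccAbove (fun _ : Fin (n + 1) => α) (Fin.last n)).symm
  have hf' := (hmp.integrable_comp_emb (MeasurableEquiv.measurableEmbedding _)).2 hf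
  simpa only [Function.comp_apply, piFinSuccAbove_last_symm_apply] using hf'.integral_prod_left

lemma integral_eq_integral_integral_snoc (hf : Integrable f) :
    ∫ x, f x = ∫ u : α, ∫ σ : Fin n → α, f (Fin.snoc σ u) := by
  have hmp := (volume_preserving_piFinSuccAbove (fun _ : Fin (n + 1) => α) (Fin.last n)).symm
  have hf' := (hmp.integrable_comp_emb (MeasurableEquiv.measurableEmbedding _)).2 hf
  rw [← hmp.integral_comp', Measure.volume_eq_prod]
  exact (integral_prod _ hf').trans
    (by simp only [Function.comp_apply, piFinSuccAbove_last_symm_apply])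

end SnocIntegral

lemma intervalIntegral_const_mul_mul_const {A : Type*} [NormedRing A] [NormedSpace ℝ A]
    [IsScalarTower ℝ A A] [SMulCommClass ℝ A A] {f : ℝ → A} {a b : ℝ}
    (hf : IntervalIntegrable f volume a b) (c d : A) :
    ∫ x in a..b, c * f x * d = c * (∫ x in a..b, f x) * d := by
  rw [intervalIntegral, intervalIntegral, integral_mul_const_of_integrable (hf.1.const_mul c),
    integral_mul_const_of_integrable (hf.2.const_mul c), integral_const_mul_of_integrable hf.1,
    integral_const_mul_of_integrable hf.2, ← sub_mul, ← mul_sub]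

section Dyson

variable (H0 V : 𝓗 →L[ℂ] 𝓗)

lemma integrableOn_simplex (j : ℕ) (t : ℝ) :
    IntegrableOn (fun σ : Fin j → ℝ => (List.ofFn fun i => interactionV H0 V (σ i)).reverse.prod)
      (simplex j t) :=
  (continuous_prod_reverse_ofFn (continuous_interactionV H0 V) j).continuousOn.integrableOn_compact
    (isCompact_simplex j t)

lemma dyson_zero (t : ℝ) : dyson H0 V 0 t = 1 := by
  simp [dyson, simplex_zero, measureReal_def, volume_pi]

lemma integral_indicator_simplex_snoc (j : ℕ) (t u : ℝ) :
    ∫ σ : Fin j → ℝ, (simplex (j + 1) t).indicator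
        (fun σ => (List.ofFn fun i => interactionV H0 V (σ i)).reverse.prod) (Fin.snoc σ u)
      = (Set.Icc 0 t).indicator (fun u => interactionV H0 V u * dyson H0 V j u) u := by
  by_cases hu : u ∈ Set.Icc 0 t
  · rw [Set.indicator_of_mem hu, dyson,
      ← integral_const_mul_of_integrable (integrableOn_simplex H0 V j u),
      ← integral_indicator (measurableSet_simplex j u)]
    congr 1
    funext σ
    by_cases hσ : σ ∈ simplex j u
    · rw [Set.indicator_of_mem (snoc_mem_simplex_iff.2 ⟨hu, hσ⟩), Set.indicator_of_mem hσ]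
      exact prod_reverse_ofFn_snoc _ σ u
    · rw [Set.indicator_of_notMem (fun h => hσ (snoc_mem_simplex_iff.1 h).2),
        Set.indicator_of_notMem hσ]
  · simp [snoc_mem_simplex_iff, hu]

lemma dyson_succ_eq_setIntegral (j : ℕ) (t : ℝ) :
    dyson H0 V (j + 1) t = ∫ u in Set.Icc 0 t, interactionV H0 V u * dyson H0 V j u := by
  rw [dyson, ← integral_indicator (measurableSet_simplex _ _), integral_eq_integral_integral_snoc
    ((integrable_indicator_iff (measurableSet_simplex _ _)).2 (integrableOn_simplex H0 V _ _))]
  simp_rw [integral_indicator_simplex_snoc]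
  exact integral_indicator measurableSet_Icc

lemma integrableOn_interactionV_mul_dyson (j : ℕ) (t : ℝ) :
    IntegrableOn (fun u => interactionV H0 V u * dyson H0 V j u) (Set.Icc 0 t) := by
  rw [← integrable_indicator_iff measurableSet_Icc]
  have := ((integrable_indicator_iff (measurableSet_simplex (j + 1) t)).2
    (integrableOn_simplex H0 V _ _)).integral_snoc
  simpa only [integral_indicator_simplex_snoc] using this

lemma intervalIntegrable_interactionV_mul_dyson (j : ℕ) {a b : ℝ} (ha : 0 ≤ a) (hb : 0 ≤ b) :
    IntervalIntegrable (fun u => interactionV H0 V u * dyson H0 V j u) volume a b :=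
  ((integrableOn_interactionV_mul_dyson H0 V j (max a b)).mono_set
    (Set.uIcc_subset_Icc ⟨ha, le_max_left a b⟩ ⟨hb, le_max_right a b⟩)).intervalIntegrable

lemma dyson_succ (j : ℕ) {t : ℝ} (ht : 0 ≤ t) :
    dyson H0 V (j + 1) t = ∫ u in 0..t, interactionV H0 V u * dyson H0 V j u := by
  rw [dyson_succ_eq_setIntegral, intervalIntegral.integral_of_le ht, integral_Icc_eq_integral_Ioc]

lemma dyson_succ_add (j : ℕ) {s t : ℝ} (hs : 0 ≤ s) (ht : 0 ≤ t) :
    dyson H0 V (j + 1) (s + t) = dyson H0 V (j + 1) s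
      + ∫ u in 0..t, interactionV H0 V (s + u) * dyson H0 V j (s + u) := by
  rw [dyson_succ H0 V j (add_nonneg hs ht), dyson_succ H0 V j hs,
    ← intervalIntegral.integral_add_adjacent_intervals
      (intervalIntegrable_interactionV_mul_dyson H0 V j le_rfl hs)
      (intervalIntegrable_interactionV_mul_dyson H0 V j hs (add_nonneg hs ht)),
    intervalIntegral.integral_comp_add_left (fun u => interactionV H0 V u * dyson H0 V j u),
    add_zero]

end Dyson

theorem dyson_product_structure_general (H0 V : 𝓗 →L[ℂ] 𝓗)
    (s t : ℝ) (hs : 0 ≤ s) (ht : 0 ≤ t) (j : ℕ) :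
    dyson H0 V j (s + t) =
      ∑ k ∈ Finset.range (j + 1),
        (opExp (-s) H0 * dyson H0 V (j - k) t * opExp s H0) * dyson H0 V k s := by
  induction j generalizing t with
  | zero => simp [dyson_zero, opExp_neg_mul]
  | succ j ih =>
    have hshift : ∀ u ∈ Set.uIcc 0 t, interactionV H0 V (s + u) * dyson H0 V j (s + u)
        = ∑ k ∈ Finset.range (j + 1), opExp (-s) H0 * (interactionV H0 V u * dyson H0 V (j - k) u)
            * (opExp s H0 * dyson H0 V k s) := by
      intro u hu
      rw [interactionV_add, ih u (Set.uIcc_of_le ht ▸ hu).1, Finset.mul_sum]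
      refine Finset.sum_congr rfl fun k _ => ?_
      simp only [mul_assoc]
      rw [← mul_assoc (opExp s H0) (opExp (-s) H0), opExp_mul_neg, one_mul]
    have hintegral : ∀ k ∈ Finset.range (j + 1),
        ∫ u in 0..t, opExp (-s) H0 * (interactionV H0 V u * dyson H0 V (j - k) u)
            * (opExp s H0 * dyson H0 V k s)
          = opExp (-s) H0 * dyson H0 V (j + 1 - k) t * opExp s H0 * dyson H0 V k s := by
      intro k hk
      rw [intervalIntegral_const_mul_mul_const
        (intervalIntegrable_interactionV_mul_dyson H0 V _ le_rfl ht), ← dyson_succ H0 V _ ht,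
        Nat.sub_add_comm (Finset.mem_range_succ_iff.1 hk)]
      simp only [mul_assoc]
    rw [dyson_succ_add H0 V j hs ht, intervalIntegral.integral_congr hshift,
      intervalIntegral.integral_finsetSum fun k _ =>
        ((intervalIntegrable_interactionV_mul_dyson H0 V _ le_rfl ht).const_mul _).mul_const _,
      Finset.sum_congr rfl hintegral, Finset.sum_range_succ _ (j + 1), Nat.sub_self, dyson_zero,
      mul_one, opExp_neg_mul, one_mul, add_comm]

/-- product structure of the Dyson series.  For all `s, t ≥ 0` and every
integer `j ≥ 0`, `T_j(s+t) = ∑_{k=0}^j (e^{isH0} T_{j-k}(t) e^{-isH0}) T_k(s)`. -/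
theorem dyson_product_structure (H0 V : 𝓗 →L[ℂ] 𝓗)
    (hH0 : IsSelfAdjoint H0) (hV : IsSelfAdjoint V)
    (s t : ℝ) (hs : 0 ≤ s) (ht : 0 ≤ t) (j : ℕ) :
    dyson H0 V j (s + t) =
      ∑ k ∈ Finset.range (j + 1),
        (opExp (-s) H0 * dyson H0 V (j - k) t * opExp s H0) * dyson H0 V k s :=
  dyson_product_structure_general H0 V s t hs ht j
end
end
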